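/- arXiv:2505.12128 — 5 statements merged into one kernel-verified Lean document; each statement's English description precedes it below -/
import Mathlib

section
/- For every integer k ≥ 1, 1/sqrt(π(k+1)) ≤ r_k ≤ 1/sqrt(πk), where r_k = (1/4^k) * binom(2k, k). -/
/-!
Wallis' partial products `W k = ∏_{i<k} (2i+2)² / ((2i+1)(2i+3))` satisfy
`(2k+1) · W k · r_k² = 1`, as both sides obey the same recursion in `k`. Since
`(2k+1)/(2k+2) · π/2 ≤ W k ≤ π/2`, this pins `r_k²` between `1/(π(k+1))` and `1/(πk)`.
-/

noncomputable def r (k : ℕ) : ℝ := (Nat.choose (2*k) k : ℝ) / 4^k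

open Real Real.Wallis

lemma r_pos (k : ℕ) : 0 < r k := by
  have : (0 : ℝ) < (2 * k).choose k := by exact_mod_cast Nat.centralBinom_pos k
  unfold r
  positivity

lemma r_succ (k : ℕ) : r (k + 1) = r k * ((2 * k + 1) / (2 * k + 2)) := by
  have h : ((k : ℝ) + 1) * (2 * (k + 1)).choose (k + 1) = 2 * (2 * k + 1) * (2 * k).choose k := by
    exact_mod_cast Nat.succ_mul_centralBinom_succ k
  unfold r
  field_simp
  linear_combination 4 ^ k * 2 * h

lemma two_mul_add_one_mul_W_mul_r_sq (k : ℕ) : (2 * k + 1) * W k * r k ^ 2 = 1 := by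
  induction k with
  | zero => simp [W, r]
  | succ k ih =>
    calc (2 * ((k + 1 : ℕ) : ℝ) + 1) * W (k + 1) * r (k + 1) ^ 2
        = (2 * k + 1) * W k * r k ^ 2 := by
          rw [W_succ, r_succ]
          push_cast
          field_simp
          ring
      _ = 1 := ih

lemma r_sq_eq_inv (k : ℕ) : r k ^ 2 = ((2 * k + 1) * W k)⁻¹ :=
  eq_inv_of_mul_eq_one_right (two_mul_add_one_mul_W_mul_r_sq k)

lemma inv_pi_mul_succ_le_r_sq (k : ℕ) : (π * (k + 1))⁻¹ ≤ r k ^ 2 := by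
  have hW : (2 * k + 1) * W k ≤ (2 * k + 1) * (π / 2) := by gcongr; exact W_le k
  rw [r_sq_eq_inv]
  refine inv_anti₀ (mul_pos (by positivity) (W_pos k)) ?_
  nlinarith [pi_pos]

lemma r_sq_le_inv_pi_mul {k : ℕ} (hk : 0 < k) : r k ^ 2 ≤ (π * k)⁻¹ := by
  have hW : (2 * k + 1) * ((2 * k + 1) / (2 * k + 2) * (π / 2)) ≤ (2 * k + 1) * W k := by
    gcongr; exact le_W k
  rw [r_sq_eq_inv]
  refine inv_anti₀ (by positivity) (hW.trans' ?_)
  field_simp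
  nlinarith [pi_pos]

theorem stmt_1 (k : ℕ) (hk : 1 ≤ k) :
    1 / Real.sqrt (Real.pi * (k + 1)) ≤ r k ∧ r k ≤ 1 / Real.sqrt (Real.pi * k) := by
  simp only [one_div, ← Real.sqrt_inv]
  constructor
  · exact Real.sqrt_le_iff.mpr ⟨(r_pos k).le, inv_pi_mul_succ_le_r_sq k⟩
  · exact (Real.le_sqrt (r_pos k).le (by positivity)).mpr (r_sq_le_inv_pi_mul hk)
end

section
/- For every integer p ≥ 1, the sum over k from 0 to p-1 of r_k^2 is at most 1 + log p, where r_k = binom(2k,k)/4^k. -/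
lemma r_eq_centralBinom_div (k : ℕ) : r k = Nat.centralBinom k / 4 ^ k := by
  rw [r, Nat.centralBinom_eq_two_mul_choose]

lemma two_mul_add_two_mul_r_succ (k : ℕ) : (2 * k + 2) * r (k + 1) = (2 * k + 1) * r k := by
  have h : ((k + 1 : ℕ) : ℝ) * Nat.centralBinom (k + 1) = 2 * (2 * k + 1) * Nat.centralBinom k := by
    exact_mod_cast Nat.succ_mul_centralBinom_succ k
  rw [r_eq_centralBinom_div, r_eq_centralBinom_div, pow_succ]
  push_cast at h
  field_simp
  linear_combination 2 * h

lemma antitone_succ_mul_r_sq : Antitone fun k : ℕ => ((k : ℝ) + 1) * r k ^ 2 := by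
  refine antitone_nat_of_succ_le fun k => ?_
  have hk : (0 : ℝ) ≤ k := k.cast_nonneg
  have hratio : ((k : ℝ) + 2) * (2 * k + 1) ^ 2 ≤ (k + 1) * (2 * k + 2) ^ 2 := by nlinarith
  have hsq : (2 * (k : ℝ) + 2) ^ 2 * r (k + 1) ^ 2 = (2 * k + 1) ^ 2 * r k ^ 2 := by
    rw [← mul_pow, two_mul_add_two_mul_r_succ, mul_pow]
  push_cast
  nlinarith [mul_le_mul_of_nonneg_right hratio (sq_nonneg (r k)), sq_nonneg (r (k + 1))]

lemma r_sq_le_inv_succ (k : ℕ) : r k ^ 2 ≤ ((k : ℝ) + 1)⁻¹ := by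
  have h : ((k : ℝ) + 1) * r k ^ 2 ≤ 1 := by
    simpa [r] using antitone_succ_mul_r_sq (Nat.zero_le k)
  rw [← one_div, le_div_iff₀ (by positivity)]
  linarith

theorem stmt_3_general (p : ℕ) :
    ∑ k ∈ Finset.range p, (r k)^2 ≤ 1 + Real.log p :=
  calc ∑ k ∈ Finset.range p, (r k)^2
      ≤ ∑ k ∈ Finset.range p, ((k : ℝ) + 1)⁻¹ :=
        Finset.sum_le_sum fun k _ => r_sq_le_inv_succ k
    _ = harmonic p := by simp [harmonic]
    _ ≤ 1 + Real.log p := harmonic_le_one_add_log p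

theorem stmt_3 (p : ℕ) (hp : 1 ≤ p) :
    ∑ k ∈ Finset.range p, (r k)^2 ≤ 1 + Real.log p :=
  stmt_3_general p
end

section
/- Fix 0 ≤ β ≤ 1 and define tilde_c_k^β = sum over j from 0 to k of tilde_r_j β^j tilde_r_{k-j}, where tilde_r_j = (-1)^j binom(1/2,j). Then for all k ≥ 1, tilde_r_k (1+β) ≤ tilde_c_k^β ≤ 0. -/
/-!
Write `r_j = tr j`. The ratio `r_{j+1} / r_j = (j - 1/2) / (j + 1)` gives `r_0 = 1` and `r_j < 0`
for `j ≥ 1`.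

Lower bound: the terms `j = 0` and `j = k` of `tc β k` add up to `r_k (1 + β^k) ≥ r_k (1 + β)`,
and every other term is a product of two negative `r`'s and a nonnegative power of `β`.

Upper bound: averaging `tc β k` with its reflection `j ↦ k - j` gives
`(1 + β^k) ∑ r_j r_{k-j} - 2 tc β k = ∑ r_j (1 - β^j) · r_{k-j} (1 - β^{k-j}) ≥ 0`, while
`∑ r_j r_{k-j} = (-1)^k binom(1, k) ≤ 0` by Chu–Vandermonde (it is the `k`-th coefficient of
`√(1 - x)² = 1 - x`).
-/

/-- Generalized binomial coefficient `binom(x, k) = x(x-1)⋯(x-k+1)/k!`. -/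
noncomputable def gbinom (x : ℝ) (k : ℕ) : ℝ :=
  (∏ i ∈ Finset.range k, (x - i)) / (Nat.factorial k)

noncomputable def tr (j : ℕ) : ℝ := (-1)^j * gbinom (1/2) j

noncomputable def tc (β : ℝ) (k : ℕ) : ℝ :=
  ∑ j ∈ Finset.range (k + 1), tr j * β^j * tr (k - j)

open Finset Polynomial

lemma gbinom_eq_ringChoose (x : ℝ) (k : ℕ) : gbinom x k = Ring.choose x k := by
  rw [Ring.choose_eq_smul, gbinom, ← descPochhammer_eval_eq_prod_range, smul_eq_mul,
    ← descPochhammer_map (algebraMap ℤ ℝ), eval_map_algebraMap, aeval_eq_smeval, div_eq_inv_mul]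

lemma tr_zero : tr 0 = 1 := by simp [tr, gbinom]

lemma tr_succ (j : ℕ) : tr (j + 1) = tr j * ((j - 1/2) / (j + 1)) := by
  simp only [tr, gbinom, prod_range_succ, Nat.factorial_succ]
  push_cast
  field_simp
  ring

lemma tr_neg {j : ℕ} (hj : 1 ≤ j) : tr j < 0 := by
  induction j, hj using Nat.le_induction with
  | base => norm_num [tr, gbinom]
  | succ n hn ih =>
    rw [tr_succ]
    have : (1 : ℝ) ≤ n := by exact_mod_cast hn
    exact mul_neg_of_neg_of_pos ih (by apply div_pos <;> linarith)

lemma sum_antidiagonal_tr_mul_tr (k : ℕ) :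
    ∑ p ∈ antidiagonal k, tr p.1 * tr p.2 = (-1) ^ k * (Nat.choose 1 k : ℝ) := by
  have vandermonde := Ring.add_choose_eq (r := (1/2 : ℝ)) (s := 1/2) k (Commute.all _ _)
  rw [add_halves, show Ring.choose (1 : ℝ) k = Nat.choose 1 k by
    simpa using Ring.choose_natCast (R := ℝ) 1 k] at vandermonde
  rw [vandermonde, mul_sum]
  refine sum_congr rfl fun p hp => ?_
  rw [← mem_antidiagonal.mp hp, tr, tr, gbinom_eq_ringChoose, gbinom_eq_ringChoose]
  ring

lemma sum_antidiagonal_tr_mul_tr_nonpos {k : ℕ} (hk : 1 ≤ k) :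
    ∑ p ∈ antidiagonal k, tr p.1 * tr p.2 ≤ 0 := by
  rw [sum_antidiagonal_tr_mul_tr]
  rcases hk.eq_or_lt with rfl | hk
  · norm_num
  · simp [Nat.choose_eq_zero_of_lt hk]

lemma tc_eq_sum_antidiagonal (β : ℝ) (k : ℕ) :
    tc β k = ∑ p ∈ antidiagonal k, tr p.1 * β ^ p.1 * tr p.2 :=
  (Nat.sum_antidiagonal_eq_sum_range_succ (fun i j => tr i * β ^ i * tr j) k).symm

lemma tr_mul_one_sub_pow_nonpos {β : ℝ} (hβ0 : 0 ≤ β) (hβ1 : β ≤ 1) (j : ℕ) :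
    tr j * (1 - β ^ j) ≤ 0 := by
  rcases j.eq_zero_or_pos with rfl | hj
  · simp
  · exact mul_nonpos_of_nonpos_of_nonneg (tr_neg hj).le (sub_nonneg.mpr (pow_le_one₀ hβ0 hβ1))

lemma one_add_pow_mul_sum_sub_two_mul_tc (β : ℝ) (k : ℕ) :
    (1 + β ^ k) * ∑ p ∈ antidiagonal k, tr p.1 * tr p.2 - 2 * tc β k =
      ∑ p ∈ antidiagonal k, tr p.1 * (1 - β ^ p.1) * (tr p.2 * (1 - β ^ p.2)) := by
  have reflected : tc β k = ∑ p ∈ antidiagonal k, tr p.2 * β ^ p.2 * tr p.1 := by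
    rw [tc_eq_sum_antidiagonal, ← Nat.sum_antidiagonal_swap]
    rfl
  rw [two_mul]
  nth_rw 1 [tc_eq_sum_antidiagonal]
  rw [reflected, ← sum_add_distrib, mul_sum, ← sum_sub_distrib]
  refine sum_congr rfl fun p hp => ?_
  rw [← mem_antidiagonal.mp hp, pow_add]
  ring

lemma tc_nonpos {β : ℝ} (hβ0 : 0 ≤ β) (hβ1 : β ≤ 1) {k : ℕ} (hk : 1 ≤ k) : tc β k ≤ 0 := by
  have hsum : 0 ≤ ∑ p ∈ antidiagonal k, tr p.1 * (1 - β ^ p.1) * (tr p.2 * (1 - β ^ p.2)) :=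
    sum_nonneg fun p _ => mul_nonneg_of_nonpos_of_nonpos
      (tr_mul_one_sub_pow_nonpos hβ0 hβ1 p.1) (tr_mul_one_sub_pow_nonpos hβ0 hβ1 p.2)
  have hbound : (1 + β ^ k) * ∑ p ∈ antidiagonal k, tr p.1 * tr p.2 ≤ 0 :=
    mul_nonpos_of_nonneg_of_nonpos (by positivity) (sum_antidiagonal_tr_mul_tr_nonpos hk)
  linarith [one_add_pow_mul_sum_sub_two_mul_tc β k]

lemma tc_succ_eq (β : ℝ) (n : ℕ) :
    tc β (n + 1) = tr (n + 1) + ∑ j ∈ range n, tr (j + 1) * β ^ (j + 1) * tr (n - j) +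
      tr (n + 1) * β ^ (n + 1) := by
  rw [tc, sum_range_succ', sum_range_succ]
  simp only [tr_zero, Nat.sub_self, Nat.sub_zero, Nat.add_sub_add_right]
  ring

lemma tr_mul_one_add_le_tc {β : ℝ} (hβ0 : 0 ≤ β) (hβ1 : β ≤ 1) {k : ℕ} (hk : 1 ≤ k) :
    tr k * (1 + β) ≤ tc β k := by
  obtain ⟨n, rfl⟩ := Nat.exists_eq_add_of_le' hk
  have hmid : 0 ≤ ∑ j ∈ range n, tr (j + 1) * β ^ (j + 1) * tr (n - j) :=
    sum_nonneg fun j hj => mul_nonneg_of_nonpos_of_nonpos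
      (mul_nonpos_of_nonpos_of_nonneg (tr_neg j.succ_pos).le (pow_nonneg hβ0 _))
      (tr_neg (Nat.sub_pos_of_lt (mem_range.mp hj))).le
  have hpow : tr (n + 1) * β ≤ tr (n + 1) * β ^ (n + 1) :=
    mul_le_mul_of_nonpos_left (pow_le_of_le_one hβ0 hβ1 n.succ_ne_zero) (tr_neg n.succ_pos).le
  rw [tc_succ_eq]
  linarith

theorem stmt_11 (β : ℝ) (hβ0 : 0 ≤ β) (hβ1 : β ≤ 1) (k : ℕ) (hk : 1 ≤ k) :
    tr k * (1 + β) ≤ tc β k ∧ tc β k ≤ 0 :=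
  ⟨tr_mul_one_add_le_tc hβ0 hβ1 hk, tc_nonpos hβ0 hβ1 hk⟩
end

section
/- Let n ≥ 1, let A be the n×n lower-triangular all-ones matrix (prefix-sum matrix), and for λ in (0,1) let C_λ^{-1} be the lower triangular Toeplitz matrix with first column (1, -λ, 0, ..., 0). Then the product A·C_λ^{-1} is the lower triangular Toeplitz matrix with first column (1, 1-λ, 1-λ, ..., 1-λ), and the quantity E(λ)^2 = (1/n)(1 + (1-λ)^2 (n-1)) · sum_{k=0}^{n-1} λ^{2k} satisfies inf over λ in (0,1) of E(λ)^2 ≤ 2/sqrt(n). -/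
/-!
Left multiplication by `A` replaces each column by its prefix sums, and the prefix sums of a
column `(…, 0, 1, -λ, 0, …)` of `C_λ⁻¹` are `0`, then `1`, then `1 - λ` forever.

For the bound, write `t = λ²`: the geometric sum `∑ t^k` is at most `1 / (1 - t)`, and
`(1 - λ)² ≤ (1 - t)²`. The choice `1 - t = 1 / √n` balances the two factors:
`E(λ)² ≤ (1/n) (1 + (n - 1)/n) √n ≤ 2 / √n`.
-/

open Finset

theorem Matrix.mul_apply_eq_sum_range_of_lowerOnes {R : Type*} [Semiring R] {n : ℕ}
    (A M : Matrix (Fin n) (Fin n) R) (m : ℕ → ℕ → R)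
    (hA : ∀ i j : Fin n, A i j = if (j : ℕ) ≤ (i : ℕ) then 1 else 0)
    (hM : ∀ i j : Fin n, M i j = m i j) (i j : Fin n) :
    (A * M) i j = ∑ k ∈ range (i + 1), m k j := by
  have hrange : (range n).filter (· ≤ (i : ℕ)) = range (i + 1) := by
    ext k; simp only [mem_filter, mem_range]; omega
  simp only [Matrix.mul_apply, hA, hM, ite_mul, one_mul, zero_mul]
  rw [Fin.sum_univ_eq_sum_range (fun k => if k ≤ (i : ℕ) then m k j else 0), ← sum_filter, hrange]

theorem Finset.sum_range_succ_bidiagonal {R : Type*} [CommRing R] (c : R) (i j : ℕ) :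
    ∑ k ∈ range (i + 1), (if k = j then 1 else if k = j + 1 then -c else 0) =
      if i = j then 1 else if j < i then 1 - c else 0 := by
  have hsplit : ∀ k, (if k = j then (1 : R) else if k = j + 1 then -c else 0) =
      (if j = k then 1 else 0) - c * (if j + 1 = k then 1 else 0) := by
    intro k; split_ifs <;> first | omega | ring
  simp only [hsplit, sum_sub_distrib, ← mul_sum, sum_ite_eq, mem_range]
  split_ifs <;> first | omega | ring

noncomputable def factorizationErrorSq (n : ℕ) (lam : ℝ) : ℝ :=
  (1 / (n : ℝ)) * (1 + (1 - lam) ^ 2 * ((n : ℝ) - 1)) * ∑ k ∈ range n, lam ^ (2 * k)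

theorem factorizationErrorSq_nonneg (n : ℕ) (lam : ℝ) : 0 ≤ factorizationErrorSq n lam := by
  rcases n with _ | n
  · simp [factorizationErrorSq]
  · simp only [factorizationErrorSq, pow_mul, Nat.cast_succ, add_sub_cancel_right]
    positivity

theorem factorizationErrorSq_le {n : ℕ} (hn : 1 ≤ n) {lam : ℝ} (h0 : 0 ≤ lam) (h1 : lam < 1) :
    factorizationErrorSq n lam ≤
      (1 / (n : ℝ)) * (1 + (1 - lam ^ 2) ^ 2 * ((n : ℝ) - 1)) * (1 / (1 - lam ^ 2)) := by
  have hn' : (0 : ℝ) ≤ n - 1 := by rw [sub_nonneg]; exact_mod_cast hn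
  have hgeom : ∑ k ∈ range n, lam ^ (2 * k) ≤ 1 / (1 - lam ^ 2) := by
    simpa [pow_mul] using geom_sum_Ico_le_of_lt_one (m := 0) (n := n) (sq_nonneg lam)
      (by nlinarith)
  have hgap : (1 - lam) ^ 2 ≤ (1 - lam ^ 2) ^ 2 := by
    have : 1 - lam ≤ 1 - lam ^ 2 := by nlinarith
    gcongr
  unfold factorizationErrorSq
  gcongr

theorem exists_factorizationErrorSq_le (n : ℕ) :
    ∃ lam ∈ Set.Ioo (0 : ℝ) 1, factorizationErrorSq n lam ≤ 2 / Real.sqrt n := by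
  rcases le_or_gt n 1 with hn | hn
  · refine ⟨1 / 2, by norm_num, ?_⟩
    interval_cases n <;> norm_num [factorizationErrorSq]
  set s := Real.sqrt n with hs
  have hs1 : 1 < s := by rw [hs, Real.lt_sqrt zero_le_one]; exact_mod_cast (by omega : 1 < n)
  have hss : s ^ 2 = n := Real.sq_sqrt (Nat.cast_nonneg n)
  have hinv : 0 < 1 / s ∧ 1 / s < 1 := ⟨by positivity, (div_lt_one (by positivity)).2 hs1⟩
  set lam := Real.sqrt (1 - 1 / s)
  have hlam : lam ^ 2 = 1 - 1 / s := Real.sq_sqrt (by linarith)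
  have hlam0 : 0 < lam := Real.sqrt_pos.2 (by linarith)
  have hlam1 : lam < 1 := (Real.sqrt_lt' one_pos).2 (by linarith)
  refine ⟨lam, ⟨hlam0, hlam1⟩, (factorizationErrorSq_le (by omega) hlam0.le hlam1).trans ?_⟩
  rw [hlam, ← hss]
  field_simp
  nlinarith

open Finset in
theorem stmt_17_general (n : ℕ)
    (A : Matrix (Fin n) (Fin n) ℝ)
    (hA : ∀ i j : Fin n, A i j = if (j : ℕ) ≤ (i : ℕ) then 1 else 0)
    (Cinv : ℝ → Matrix (Fin n) (Fin n) ℝ)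
    (hCinv : ∀ lam : ℝ, ∀ i j : Fin n,
      Cinv lam i j = if (i : ℕ) = (j : ℕ) then 1
        else if (i : ℕ) = (j : ℕ) + 1 then -lam else 0) :
    (∀ lam ∈ Set.Ioo (0 : ℝ) 1, ∀ i j : Fin n,
      (A * Cinv lam) i j =
        if (i : ℕ) = (j : ℕ) then 1
        else if (j : ℕ) < (i : ℕ) then 1 - lam else 0) ∧
    sInf ((fun lam : ℝ =>
        (1 / (n : ℝ)) * (1 + (1 - lam)^2 * ((n : ℝ) - 1)) *
          ∑ k ∈ Finset.range n, lam^(2 * k)) '' Set.Ioo (0 : ℝ) 1)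
      ≤ 2 / Real.sqrt n := by
  refine ⟨fun lam _ i j => ?_, ?_⟩
  · rw [Matrix.mul_apply_eq_sum_range_of_lowerOnes A (Cinv lam)
      (fun k j => if k = j then 1 else if k = j + 1 then -lam else 0) hA (hCinv lam),
      sum_range_succ_bidiagonal]
  · change sInf (factorizationErrorSq n '' _) ≤ _
    obtain ⟨lam, hlam, hle⟩ := exists_factorizationErrorSq_le n
    have hbdd : BddBelow (factorizationErrorSq n '' Set.Ioo 0 1) :=
      ⟨0, Set.forall_mem_image.2 fun lam _ => factorizationErrorSq_nonneg n lam⟩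
    exact (csInf_le hbdd (Set.mem_image_of_mem _ hlam)).trans hle

open Finset in
theorem stmt_17 (n : ℕ) (hn : 1 ≤ n)
    (A : Matrix (Fin n) (Fin n) ℝ)
    (hA : ∀ i j : Fin n, A i j = if (j : ℕ) ≤ (i : ℕ) then 1 else 0)
    (Cinv : ℝ → Matrix (Fin n) (Fin n) ℝ)
    (hCinv : ∀ lam : ℝ, ∀ i j : Fin n,
      Cinv lam i j = if (i : ℕ) = (j : ℕ) then 1
        else if (i : ℕ) = (j : ℕ) + 1 then -lam else 0) :
    (∀ lam ∈ Set.Ioo (0 : ℝ) 1, ∀ i j : Fin n,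
      (A * Cinv lam) i j =
        if (i : ℕ) = (j : ℕ) then 1
        else if (j : ℕ) < (i : ℕ) then 1 - lam else 0) ∧
    sInf ((fun lam : ℝ =>
        (1 / (n : ℝ)) * (1 + (1 - lam)^2 * ((n : ℝ) - 1)) *
          ∑ k ∈ Finset.range n, lam^(2 * k)) '' Set.Ioo (0 : ℝ) 1)
      ≤ 2 / Real.sqrt n :=
  stmt_17_general n A hA Cinv hCinv
end

section
/- Let C ∈ R^{m×n} have columns C_1, ..., C_n partitioned into b disjoint groups S_1, ..., S_b. Define sens^2 = max over j in [1,b] of the supremum over subsets S ⊆ S_j of ||sum_{i in S} C_i||_2^2. Then sens^2 ≥ (1/(4b)) ||C||_F^2. -/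
/-!
Averaging over all subsets `T` of a group `s` of vectors gives
`∑_{T ⊆ s} ‖∑_{i ∈ T} vᵢ‖² = 2^{|s|-2} (∑_{i ∈ s} ‖vᵢ‖² + ‖∑_{i ∈ s} vᵢ‖²)`, the counting form of
`E ‖∑ εᵢ vᵢ‖² ≥ ¼ ∑ ‖vᵢ‖²` for Bernoulli(1/2) signs. Hence some `T ⊆ s` has
`4 ‖∑_{i ∈ T} vᵢ‖² ≥ ∑_{i ∈ s} ‖vᵢ‖²`. Applied to the columns of `C` in each group, this bounds
the squared Frobenius mass of every group by `4 sens²`, and the `b` groups cover all columns.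
-/

open Finset

theorem Finset.sum_le_sum_sum_of_forall_exists_mem {ι κ M : Type*} [Fintype ι] [Fintype κ]
    [AddCommMonoid M] [PartialOrder M] [IsOrderedAddMonoid M] {f : ι → M} (hf : 0 ≤ f)
    {S : κ → Finset ι} (hS : ∀ i, ∃ j, i ∈ S j) :
    ∑ i, f i ≤ ∑ j, ∑ i ∈ S j, f i := by
  classical
  calc ∑ i, f i ≤ ∑ i, ∑ j, if i ∈ S j then f i else 0 := by
        refine sum_le_sum fun i _ => ?_
        obtain ⟨j, hj⟩ := hS i
        simpa [hj] using single_le_sum (f := fun j => if i ∈ S j then f i else 0)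
          (fun j _ => by split_ifs; exacts [hf i, le_rfl]) (mem_univ j)
    _ = ∑ j, ∑ i ∈ S j, f i := by
        rw [sum_comm]
        simp

theorem Finset.two_nsmul_sum_powerset_sum {ι M : Type*} [DecidableEq ι] [AddCommMonoid M]
    (s : Finset ι) (v : ι → M) :
    2 • ∑ T ∈ s.powerset, ∑ i ∈ T, v i = 2 ^ #s • ∑ i ∈ s, v i := by
  induction s using Finset.induction_on with
  | empty => simp
  | @insert a s ha ih =>
    have hins : ∀ T ∈ s.powerset, ∑ i ∈ insert a T, v i = v a + ∑ i ∈ T, v i := fun T hT =>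
      sum_insert fun h => ha (mem_powerset.mp hT h)
    rw [sum_powerset_insert ha, sum_congr rfl hins, sum_add_distrib, sum_const, card_powerset,
      card_insert_of_notMem ha, sum_insert ha, nsmul_add, nsmul_add, ih, pow_succ, mul_nsmul,
      smul_add, smul_add, two_nsmul, two_nsmul]
    abel

theorem Finset.four_mul_sum_powerset_norm_sum_sq {ι E : Type*} [DecidableEq ι]
    [NormedAddCommGroup E] [InnerProductSpace ℝ E] (s : Finset ι) (v : ι → E) :
    4 * ∑ T ∈ s.powerset, ‖∑ i ∈ T, v i‖ ^ 2
      = 2 ^ #s * (∑ i ∈ s, ‖v i‖ ^ 2 + ‖∑ i ∈ s, v i‖ ^ 2) := by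
  induction s using Finset.induction_on with
  | empty => simp
  | @insert a s ha ih =>
    have hins : ∀ T ∈ s.powerset, ‖∑ i ∈ insert a T, v i‖ ^ 2
        = ‖v a‖ ^ 2 + 2 * inner ℝ (v a) (∑ i ∈ T, v i) + ‖∑ i ∈ T, v i‖ ^ 2 := fun T hT => by
      rw [sum_insert fun h => ha (mem_powerset.mp hT h), norm_add_sq_real]
    have hlin : 2 * inner ℝ (v a) (∑ T ∈ s.powerset, ∑ i ∈ T, v i)
        = 2 ^ #s * inner ℝ (v a) (∑ i ∈ s, v i) := by
      have h := congrArg (inner ℝ (v a)) (two_nsmul_sum_powerset_sum s v)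
      simpa only [← Nat.cast_smul_eq_nsmul ℝ, real_inner_smul_right, Nat.cast_ofNat,
        Nat.cast_pow] using h
    rw [sum_powerset_insert ha, sum_congr rfl hins, sum_add_distrib, sum_add_distrib, sum_const,
      card_powerset, ← mul_sum, ← inner_sum, card_insert_of_notMem ha, sum_insert ha,
      sum_insert ha, norm_add_sq_real, nsmul_eq_mul]
    push_cast
    linear_combination 2 * ih + 4 * hlin

theorem Finset.exists_subset_sum_norm_sq_le_four_mul_norm_sum_sq {ι E : Type*} [DecidableEq ι]
    [NormedAddCommGroup E] [InnerProductSpace ℝ E] (s : Finset ι) (v : ι → E) :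
    ∃ T ⊆ s, ∑ i ∈ s, ‖v i‖ ^ 2 ≤ 4 * ‖∑ i ∈ T, v i‖ ^ 2 := by
  have havg : ∑ _T ∈ s.powerset, ∑ i ∈ s, ‖v i‖ ^ 2
      ≤ ∑ T ∈ s.powerset, 4 * ‖∑ i ∈ T, v i‖ ^ 2 := by
    rw [sum_const, card_powerset, nsmul_eq_mul, ← mul_sum, four_mul_sum_powerset_norm_sum_sq]
    push_cast
    gcongr
    exact le_add_of_nonneg_right (sq_nonneg _)
  obtain ⟨T, hT, h⟩ := exists_le_of_sum_le ⟨∅, empty_mem_powerset s⟩ havg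
  exact ⟨T, mem_powerset.mp hT, h⟩

open Finset in
theorem stmt_18_general (m n b : ℕ) (hb : 1 ≤ b)
    (C : Matrix (Fin m) (Fin n) ℝ)
    (S : Fin b → Finset (Fin n))
    (hcover : ∀ i : Fin n, ∃ j : Fin b, i ∈ S j)
    (sens2 : ℝ)
    (hsens2 : ∀ j : Fin b, ∀ T ⊆ S j,
      ∑ a : Fin m, (∑ i ∈ T, C a i)^2 ≤ sens2) :
    sens2 ≥ (1 / (4 * b)) * ∑ a : Fin m, ∑ i : Fin n, (C a i)^2 := by
  set v : Fin n → EuclideanSpace ℝ (Fin m) := fun i => WithLp.toLp 2 fun a => C a i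
  have hnorm (T : Finset (Fin n)) : ‖∑ i ∈ T, v i‖ ^ 2 = ∑ a, (∑ i ∈ T, C a i) ^ 2 := by
    simp [v, ← WithLp.toLp_sum, EuclideanSpace.real_norm_sq_eq]
  have hgroup (j : Fin b) : ∑ i ∈ S j, ‖v i‖ ^ 2 ≤ 4 * sens2 := by
    obtain ⟨T, hT, h⟩ := exists_subset_sum_norm_sq_le_four_mul_norm_sum_sq (S j) v
    linarith [hnorm T, hsens2 j T hT]
  have htotal : ∑ a, ∑ i, C a i ^ 2 ≤ b * (4 * sens2) := calc
    ∑ a, ∑ i, C a i ^ 2 = ∑ i, ‖v i‖ ^ 2 := by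
      simp [sum_comm (γ := Fin m), v, EuclideanSpace.real_norm_sq_eq]
    _ ≤ ∑ j, ∑ i ∈ S j, ‖v i‖ ^ 2 :=
      sum_le_sum_sum_of_forall_exists_mem (fun i => sq_nonneg _) hcover
    _ ≤ ∑ _j : Fin b, 4 * sens2 := sum_le_sum fun j _ => hgroup j
    _ = b * (4 * sens2) := by simp
  rw [ge_iff_le, one_div_mul_eq_div, div_le_iff₀ (by positivity)]
  linarith

open Finset in
theorem stmt_18 (m n b : ℕ) (hb : 1 ≤ b)
    (C : Matrix (Fin m) (Fin n) ℝ)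
    (S : Fin b → Finset (Fin n))
    (hdisj : ∀ j j' : Fin b, j ≠ j' → Disjoint (S j) (S j'))
    (hcover : ∀ i : Fin n, ∃ j : Fin b, i ∈ S j)
    (sens2 : ℝ)
    (hsens2 : ∀ j : Fin b, ∀ T ⊆ S j,
      ∑ a : Fin m, (∑ i ∈ T, C a i)^2 ≤ sens2) :
    sens2 ≥ (1 / (4 * b)) * ∑ a : Fin m, ∑ i : Fin n, (C a i)^2 :=
  stmt_18_general m n b hb C S hcover sens2 hsens2
end
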